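/- arXiv:2512.24699 — 6 statements merged into one kernel-verified Lean document; each statement's English description precedes it below -/
import Mathlib

section
/- Let a, b, c, d be positive integers with e := |ad − bc| ≠ 0, and let F : ℂ* × ℂ* → ℂ* × ℂ* be the group homomorphism F(z,w) = (z^a w^b, z^c w^d). Then F is surjective and every fiber of F has exactly e elements; in particular the kernel of F has cardinality e. -/
/-!
A point `x` of the torus `(ℂˣ)ⁿ` is the same thing as the character `m ↦ ∏ xⱼ ^ mⱼ` of the
lattice `ℤⁿ`, and under this identification the monomial map `f_A` becomes precomposition with
`Aᵀ`. Hence `ker f_A` is the group of characters of the finite group `ℤⁿ ⧸ Aᵀ ℤⁿ`, which has as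
many characters as elements, namely `|det A|`. Surjectivity comes from the adjugate:
`f_A ∘ f_{adj A}` is `x ↦ x ^ det A`, and every unit of `ℂ` has `det A`-th roots. Being a
surjective homomorphism, `f_A` then has all its fibers of the size of its kernel.
-/

theorem natCard_addMonoidHom_additive_units {Q K : Type*} [AddCommGroup Q] [Finite Q] [Field K]
    [IsAlgClosed K] [CharZero K] : Nat.card (Q →+ Additive Kˣ) = Nat.card Q := by
  have : NeZero (Monoid.exponent (Multiplicative Q) : K) :=
    ⟨Nat.cast_ne_zero.2 Monoid.exponent_ne_zero_of_finite⟩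
  rw [Nat.card_congr AddMonoidHom.toMultiplicativeLeft,
    CommGroup.card_monoidHom_of_hasEnoughRootsOfUnity, Nat.card_congr Multiplicative.toAdd]

theorem Units.zpow_surjective_of_isAlgClosed {K : Type*} [Field K] [IsAlgClosed K] {k : ℤ}
    (hk : k ≠ 0) : Function.Surjective fun x : Kˣ => x ^ k := by
  intro y
  obtain ⟨z, hz⟩ := IsAlgClosed.exists_pow_nat_eq (y : K) (Int.natAbs_pos.2 hk)
  have hz0 : z ≠ 0 := by rintro rfl; exact y.ne_zero (by simpa [hk] using hz.symm)
  set u := Units.mk0 z hz0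
  have hu : u ^ k.natAbs = y := Units.ext (by simpa [u] using hz)
  rcases Int.natAbs_eq k with hk' | hk'
  · exact ⟨u, show u ^ k = y by rw [hk', zpow_natCast, hu]⟩
  · exact ⟨u⁻¹, show u⁻¹ ^ k = y by rw [hk', inv_zpow, zpow_neg, inv_inv, zpow_natCast, hu]⟩

theorem MonoidHom.natCard_preimage_singleton {G H : Type*} [Group G] [Group H] (f : G →* H)
    (p : G) : Nat.card (f ⁻¹' {f p}) = Nat.card f.ker :=
  Nat.card_congr <| ((Equiv.mulLeft p).subtypeEquiv fun x => by simp).symm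

@[simps!]
def MulEquiv.piFinTwo (M : Type*) [Mul M] : (Fin 2 → M) ≃* M × M :=
  MulEquiv.mk' (piFinTwoEquiv fun _ => M) fun _ _ => rfl

namespace Matrix

variable {ι : Type*} [Fintype ι] {G : Type*} [CommGroup G]

def monomialHom (A : Matrix ι ι ℤ) : (ι → G) →* (ι → G) where
  toFun x i := ∏ j, x j ^ A i j
  map_one' := by ext; simp
  map_mul' x y := by ext; simp [mul_zpow, Finset.prod_mul_distrib]

@[simp]
theorem monomialHom_apply (A : Matrix ι ι ℤ) (x : ι → G) (i : ι) :
    monomialHom A x i = ∏ j, x j ^ A i j := rfl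

variable [DecidableEq ι]

def latticeChar : (ι → G) ≃ ((ι → ℤ) →+ Additive G) :=
  (Equiv.piCongrRight fun _ => Additive.ofMul).trans <|
    (LinearEquiv.piRing ℤ (Additive G) ι ℤ).symm.toEquiv.trans
      (addMonoidHomLequivInt ℤ).symm.toEquiv

theorem latticeChar_apply (x : ι → G) (n : ι → ℤ) :
    latticeChar x n = ∑ j, n j • Additive.ofMul (x j) := by
  simp [latticeChar, LinearEquiv.piRing_symm_apply]

theorem latticeChar_one : latticeChar (1 : ι → G) = 0 := by
  ext n; simp [latticeChar_apply]

theorem latticeChar_monomialHom (A : Matrix ι ι ℤ) (x : ι → G) :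
    latticeChar (monomialHom A x) = (latticeChar x).comp Aᵀ.mulVecLin.toAddMonoidHom := by
  ext n
  simp only [latticeChar_apply, monomialHom_apply, ofMul_prod, ofMul_zpow, Finset.smul_sum,
    AddMonoidHom.comp_apply, LinearMap.toAddMonoidHom_coe, mulVecLin_apply, mulVec, dotProduct,
    transpose_apply, Finset.sum_smul, smul_smul]
  rw [Finset.sum_comm]
  simp only [mul_comm]

theorem monomialHom_mul (A B : Matrix ι ι ℤ) :
    monomialHom (G := G) (A * B) = (monomialHom A).comp (monomialHom B) := by
  refine MonoidHom.ext fun x => latticeChar.injective ?_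
  simp only [MonoidHom.comp_apply, latticeChar_monomialHom, transpose_mul, mulVecLin_mul]
  rfl

theorem monomialHom_smul_one (k : ℤ) (x : ι → G) :
    monomialHom (k • 1 : Matrix ι ι ℤ) x = x ^ k := by
  ext i
  simp only [monomialHom_apply, smul_apply, one_apply, smul_eq_mul, mul_ite, mul_one, mul_zero]
  rw [Finset.prod_eq_single i (fun j _ hj => by simp [Ne.symm hj]) (by simp)]
  simp

theorem monomialHom_surjective {A : Matrix ι ι ℤ}
    (hA : Function.Surjective fun g : G => g ^ A.det) :
    Function.Surjective (monomialHom (G := G) A) := by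
  intro y
  obtain ⟨z, hz⟩ : ∃ z : ι → G, z ^ A.det = y :=
    ⟨fun i => (hA (y i)).choose, funext fun i => (hA (y i)).choose_spec⟩
  refine ⟨monomialHom A.adjugate z, ?_⟩
  rw [← MonoidHom.comp_apply, ← monomialHom_mul, mul_adjugate, monomialHom_smul_one, hz]

theorem monomialHom_eq_one_iff (A : Matrix ι ι ℤ) (x : ι → G) :
    monomialHom A x = 1 ↔
      ∀ n ∈ (LinearMap.range Aᵀ.mulVecLin).toAddSubgroup, latticeChar x n = 0 := by
  rw [← latticeChar.injective.eq_iff, latticeChar_one, latticeChar_monomialHom]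
  simp [AddMonoidHom.ext_iff]

def monomialHomKerEquiv (A : Matrix ι ι ℤ) :
    (monomialHom (G := G) A).ker ≃
      ((ι → ℤ) ⧸ (LinearMap.range Aᵀ.mulVecLin).toAddSubgroup →+ Additive G) :=
  (latticeChar.subtypeEquiv fun x => by
      rw [MonoidHom.mem_ker, monomialHom_eq_one_iff, AddMonoidHom.mem_ker,
        AddMonoidHom.domRestrictHom_apply, AddMonoidHom.domRestrict_eq_zero_iff]).trans
    (AddMonoidHom.domRestrictHomKerEquiv _ _).toEquiv

theorem natCard_quotient_range_mulVecLin {A : Matrix ι ι ℤ} (hA : A.det ≠ 0) :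
    Nat.card ((ι → ℤ) ⧸ (LinearMap.range A.mulVecLin).toAddSubgroup) = A.det.natAbs := by
  let e := LinearEquiv.ofInjective A.mulVecLin (mulVec_injective_of_det_ne_zero hA)
  -- the quotient by a submodule is definitionally the quotient by its additive subgroup
  change Nat.card ((ι → ℤ) ⧸ LinearMap.range A.mulVecLin) = _
  rw [← Submodule.natAbs_det_equiv _ e, ← LinearMap.det_toLin']
  rfl

theorem natCard_ker_monomialHom {K : Type*} [Field K] [IsAlgClosed K] [CharZero K]
    {A : Matrix ι ι ℤ} (hA : A.det ≠ 0) :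
    Nat.card (monomialHom (G := Kˣ) A).ker = A.det.natAbs := by
  have hQ := natCard_quotient_range_mulVecLin (A := Aᵀ) (by rwa [det_transpose])
  rw [det_transpose] at hQ
  have : Finite ((ι → ℤ) ⧸ (LinearMap.range Aᵀ.mulVecLin).toAddSubgroup) :=
    Nat.finite_of_card_ne_zero (by rwa [hQ, Int.natAbs_ne_zero])
  rw [Nat.card_congr (monomialHomKerEquiv A), natCard_addMonoidHom_additive_units, hQ]

end Matrix

theorem monomial_map_on_torus_fibers_general
    (a b c d : ℕ)
    (e : ℕ) (he : e = ((a : ℤ) * d - (b : ℤ) * c).natAbs) (hne : e ≠ 0)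
    (F : ℂˣ × ℂˣ → ℂˣ × ℂˣ)
    (hF : ∀ p : ℂˣ × ℂˣ, F p = (p.1 ^ a * p.2 ^ b, p.1 ^ c * p.2 ^ d)) :
    Function.Surjective F ∧
    (∀ q : ℂˣ × ℂˣ, Nat.card (F ⁻¹' {q}) = e) ∧
    Nat.card {p : ℂˣ × ℂˣ | F p = 1} = e := by
  set A : Matrix (Fin 2) (Fin 2) ℤ := !![(a : ℤ), b; c, d]
  have hA : A.det.natAbs = e := by simp [A, he, Matrix.det_fin_two_of]
  have hdet : A.det ≠ 0 := by rwa [← Int.natAbs_ne_zero, hA]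
  let σ := MulEquiv.piFinTwo ℂˣ
  let f : ℂˣ × ℂˣ →* ℂˣ × ℂˣ :=
    σ.toMonoidHom.comp ((Matrix.monomialHom A).comp σ.symm.toMonoidHom)
  have hFf : F = f := by
    funext p
    simp [hF, f, σ, A, Fin.prod_univ_two]
  have hsurj : Function.Surjective F := by
    rw [hFf]
    exact σ.surjective.comp <| (Matrix.monomialHom_surjective <|
      Units.zpow_surjective_of_isAlgClosed hdet).comp σ.symm.surjective
  have hker : Nat.card {p : ℂˣ × ℂˣ | F p = 1} = e := by
    rw [← hA, ← Matrix.natCard_ker_monomialHom (K := ℂ) hdet]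
    exact Nat.card_congr <| σ.symm.toEquiv.subtypeEquiv fun p => by simp [hFf, f]
  refine ⟨hsurj, fun q => ?_, hker⟩
  obtain ⟨p, rfl⟩ := hsurj q
  rw [← hker, hFf]
  exact f.natCard_preimage_singleton p

/-- For positive integers `a, b, c, d` with `e = |ad - bc| ≠ 0`, the
monomial map `F(z,w) = (z^a w^b, z^c w^d)` on the torus `ℂ* × ℂ*` is surjective, each of
its fibers has exactly `e` elements, and its kernel has cardinality `e`. -/
theorem monomial_map_on_torus_fibers
    (a b c d : ℕ) (ha : 0 < a) (hb : 0 < b) (hc : 0 < c) (hd : 0 < d)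
    (e : ℕ) (he : e = ((a : ℤ) * d - (b : ℤ) * c).natAbs) (hne : e ≠ 0)
    (F : ℂˣ × ℂˣ → ℂˣ × ℂˣ)
    (hF : ∀ p : ℂˣ × ℂˣ, F p = (p.1 ^ a * p.2 ^ b, p.1 ^ c * p.2 ^ d)) :
    Function.Surjective F ∧
    (∀ q : ℂˣ × ℂˣ, Nat.card (F ⁻¹' {q}) = e) ∧
    Nat.card {p : ℂˣ × ℂˣ | F p = 1} = e :=
  monomial_map_on_torus_fibers_general a b c d e he hne F hF
end

section
/- Let f : ℂ² → ℂ² be the polynomial map f(x,y) = (x(y + x³), x²y). Then the topological degree of the germ of f at 0 equals 5. -/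
open scoped ENat

open Polynomial in
private lemma poly_roots_aux (p : Polynomial ℂ) (hp : p ≠ 0) :
    {x : ℂ | p.eval x = 0}.Finite ∧ {x : ℂ | p.eval x = 0}.ncard ≤ p.natDegree := by
  have h1 : {x : ℂ | p.eval x = 0} = ↑p.roots.toFinset := by
    ext x; simp [Polynomial.mem_roots, hp, Polynomial.IsRoot]
  rw [h1]
  refine ⟨(p.roots.toFinset).finite_toSet, ?_⟩
  rw [Set.ncard_coe_finset]
  exact le_trans (Multiset.toFinset_card_le _) (Polynomial.card_roots' p)

open Polynomial in
private lemma quintic_aux (a b : ℂ) :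
    {x : ℂ | x ^ 5 - a * x + b = 0}.Finite ∧ {x : ℂ | x ^ 5 - a * x + b = 0}.ncard ≤ 5 := by
  have hdeg : ((X : ℂ[X]) ^ 5 - C a * X + C b).natDegree = 5 := by compute_degree!
  have hne : ((X : ℂ[X]) ^ 5 - C a * X + C b) ≠ 0 := fun h => by simp [h] at hdeg
  have hset : {x : ℂ | x ^ 5 - a * x + b = 0}
      = {x : ℂ | ((X : ℂ[X]) ^ 5 - C a * X + C b).eval x = 0} := by
    ext x; simp
  rw [hset]
  have := poly_roots_aux _ hne
  rw [hdeg] at this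
  exact this

open Polynomial in
private lemma quartic_aux (a : ℂ) :
    {x : ℂ | x ^ 4 = a}.Finite ∧ {x : ℂ | x ^ 4 = a}.ncard ≤ 4 := by
  have hdeg : ((X : ℂ[X]) ^ 4 - C a).natDegree = 4 := by compute_degree!
  have hne : ((X : ℂ[X]) ^ 4 - C a) ≠ 0 := fun h => by simp [h] at hdeg
  have hset : {x : ℂ | x ^ 4 = a} = {x : ℂ | ((X : ℂ[X]) ^ 4 - C a).eval x = 0} := by
    ext x; simp [sub_eq_zero]
  rw [hset]
  have := poly_roots_aux _ hne
  rw [hdeg] at this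
  exact this

private lemma pow5_aux (c : ℂ) :
    {x : ℂ | x ^ 5 = c}.Finite ∧ {x : ℂ | x ^ 5 = c}.ncard ≤ 5 := by
  have hset : {x : ℂ | x ^ 5 = c} = {x : ℂ | x ^ 5 - 0 * x + (-c) = 0} := by
    ext x
    constructor <;> intro h <;> · simp only [Set.mem_setOf_eq] at *; linear_combination h
  rw [hset]
  exact quintic_aux 0 (-c)

/-- The topological degree of the germ at `0` of a map `f` whose representative is defined
on the domain `Ω ⊆ ℂ²`: the infimum over open neighborhoods `U ⊆ Ω` of `0` of the supremum,
over points `y` with finite fiber under `f|_U`, of the cardinality of that fiber. -/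
noncomputable def topdeg (Ω : Set (ℂ × ℂ)) (f : ℂ × ℂ → ℂ × ℂ) : ℕ∞ :=
  ⨅ (U : Set (ℂ × ℂ)) (_ : IsOpen U ∧ (0 : ℂ × ℂ) ∈ U ∧ U ⊆ Ω),
    ⨆ (y : ℂ × ℂ) (_ : (U ∩ f ⁻¹' {y}).Finite), ((U ∩ f ⁻¹' {y}).ncard : ℕ∞)

/-- The topological degree at `0` of the polynomial map
`f(x,y) = (x(y + x³), x²y)` equals `5`. -/
theorem topdeg_example_map_eq_five
    (f : ℂ × ℂ → ℂ × ℂ)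
    (hf : ∀ p : ℂ × ℂ, f p = (p.1 * (p.2 + p.1 ^ 3), p.1 ^ 2 * p.2)) :
    topdeg Set.univ f = 5 := by
  rw [topdeg]
  apply le_antisymm
  · -- upper bound: take U = univ
    refine iInf₂_le_of_le Set.univ ⟨isOpen_univ, Set.mem_univ _, subset_rfl⟩ ?_
    refine iSup₂_le ?_
    rintro ⟨a, b⟩ hfin
    rw [Set.univ_inter] at hfin ⊢
    by_cases hb : b = 0
    · by_cases ha : a = 0
      · -- fiber over (0,0) is infinite, contradicting hfin
        exfalso
        subst ha; subst hb
        have hinj : Function.Injective (fun y : ℂ => ((0 : ℂ), y)) := by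
          intro u v h; simpa using h
        have hsub : Set.range (fun y : ℂ => ((0 : ℂ), y)) ⊆ f ⁻¹' {((0 : ℂ), (0 : ℂ))} := by
          rintro p ⟨y, rfl⟩
          simp [Set.mem_preimage, hf]
        exact ((Set.infinite_range_of_injective hinj).mono hsub) hfin
      · -- b = 0, a ≠ 0 : fiber has at most 4 points
        subst hb
        obtain ⟨hRfin, hRcard⟩ := quartic_aux a
        have hsub : f ⁻¹' {(a, (0 : ℂ))} ⊆ (fun x : ℂ => (x, (0 : ℂ))) '' {x : ℂ | x ^ 4 = a} := by
          rintro ⟨x, y⟩ hp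
          simp only [Set.mem_preimage, hf, Set.mem_singleton_iff, Prod.mk.injEq] at hp
          obtain ⟨h1, h2⟩ := hp
          have hx : x ≠ 0 := by
            rintro rfl; apply ha; rw [← h1]; ring
          have hy : y = 0 := by
            rcases mul_eq_zero.mp h2 with h | h
            · exact absurd (pow_eq_zero_iff (by norm_num) |>.mp h) hx
            · exact h
          subst hy
          refine ⟨x, ?_, rfl⟩
          simp only [Set.mem_setOf_eq]
          linear_combination h1
        have h1 : (f ⁻¹' {(a, (0:ℂ))}).ncard ≤ ((fun x : ℂ => (x, (0:ℂ))) '' {x : ℂ | x ^ 4 = a}).ncard :=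
          Set.ncard_le_ncard hsub (hRfin.image _)
        have h2 := Set.ncard_image_le (f := fun x : ℂ => (x, (0:ℂ))) hRfin
        have : (f ⁻¹' {(a, (0:ℂ))}).ncard ≤ 5 := le_trans h1 (le_trans h2 (le_trans hRcard (by norm_num)))
        exact_mod_cast this
    · -- b ≠ 0 : fiber has at most 5 points
      obtain ⟨hRfin, hRcard⟩ := quintic_aux a b
      have hsub : f ⁻¹' {(a, b)} ⊆ (fun x : ℂ => (x, b / x ^ 2)) '' {x : ℂ | x ^ 5 - a * x + b = 0} := by
        rintro ⟨x, y⟩ hp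
        simp only [Set.mem_preimage, hf, Set.mem_singleton_iff, Prod.mk.injEq] at hp
        obtain ⟨h1, h2⟩ := hp
        have hx : x ≠ 0 := by
          rintro rfl; apply hb; rw [← h2]; ring
        refine ⟨x, ?_, ?_⟩
        · simp only [Set.mem_setOf_eq]
          linear_combination x * h1 - h2
        · have : b / x ^ 2 = y := by rw [← h2]; field_simp
          show (x, b / x ^ 2) = (x, y)
          rw [this]
      have h1 : (f ⁻¹' {(a, b)}).ncard
          ≤ ((fun x : ℂ => (x, b / x ^ 2)) '' {x : ℂ | x ^ 5 - a * x + b = 0}).ncard :=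
        Set.ncard_le_ncard hsub (hRfin.image _)
      have h2 := Set.ncard_image_le (f := fun x : ℂ => (x, b / x ^ 2)) hRfin
      have : (f ⁻¹' {(a, b)}).ncard ≤ 5 := le_trans h1 (le_trans h2 hRcard)
      exact_mod_cast this
  · -- lower bound: every neighborhood contains a fiber with 5 points
    refine le_iInf₂ ?_
    rintro U ⟨hUo, hU0, -⟩
    obtain ⟨ε, hε, hball⟩ := Metric.isOpen_iff.mp hUo 0 hU0
    set t : ℝ := min (ε / 2) (1 / 2) with ht_def
    have ht0 : 0 < t := lt_min (by linarith) (by norm_num)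
    have ht1 : t ≤ 1 := le_trans (min_le_right _ _) (by norm_num)
    have htε : t < ε := lt_of_le_of_lt (min_le_left _ _) (by linarith)
    set ζ : ℂ := Complex.exp (2 * Real.pi * Complex.I / 5) with hζ_def
    have hζ : IsPrimitiveRoot ζ 5 := Complex.isPrimitiveRoot_exp 5 (by norm_num)
    have hζ5 : ζ ^ 5 = 1 := hζ.pow_eq_one
    have hζnorm : ‖ζ‖ = 1 := Complex.norm_eq_one_of_pow_eq_one hζ5 (by norm_num)
    have htC : ((t : ℂ)) ≠ 0 := by exact_mod_cast ht0.ne'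
    set c : ℂ := -((t : ℂ)) ^ 5 with hc_def
    have hcne : c ≠ 0 := by simpa [hc_def] using pow_ne_zero 5 htC
    -- the full fiber over (0, c) is contained in a finite set
    have hfibsub : f ⁻¹' {((0 : ℂ), c)}
        ⊆ (fun x : ℂ => (x, -x ^ 3)) '' {x : ℂ | x ^ 5 = ((t : ℂ)) ^ 5} := by
      rintro ⟨x, y⟩ hp
      simp only [Set.mem_preimage, hf, Set.mem_singleton_iff, Prod.mk.injEq] at hp
      obtain ⟨h1, h2⟩ := hp
      have hx : x ≠ 0 := by
        rintro rfl; apply hcne; rw [← h2]; ring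
      have hy : y = -x ^ 3 := by
        rcases mul_eq_zero.mp h1 with h | h
        · exact absurd h hx
        · linear_combination h
      subst hy
      refine ⟨x, ?_, rfl⟩
      have : x ^ 2 * (-x ^ 3) = -((t : ℂ)) ^ 5 := h2
      show x ^ 5 = ((t : ℂ)) ^ 5
      linear_combination -this
    obtain ⟨hRfin, -⟩ := pow5_aux (((t : ℂ)) ^ 5)
    have hfibfin : (f ⁻¹' {((0 : ℂ), c)}).Finite := (hRfin.image _).subset hfibsub
    have hfin : (U ∩ f ⁻¹' {((0 : ℂ), c)}).Finite := hfibfin.inter_of_right U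
    -- five explicit points in U ∩ fiber
    set F : Finset (ℂ × ℂ) :=
      (Finset.range 5).image
        (fun k => (((t : ℂ)) * ζ ^ k, -(((t : ℂ)) * ζ ^ k) ^ 3)) with hF_def
    have hFcard : F.card = 5 := by
      rw [hF_def, Finset.card_image_of_injOn, Finset.card_range]
      intro i hi j hj hij
      have h1 : ((t : ℂ)) * ζ ^ i = ((t : ℂ)) * ζ ^ j := congrArg Prod.fst hij
      have h2 : ζ ^ i = ζ ^ j := mul_left_cancel₀ htC h1
      exact hζ.pow_inj (Finset.mem_range.mp hi) (Finset.mem_range.mp hj) h2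
    have hFsub : ↑F ⊆ U ∩ f ⁻¹' {((0 : ℂ), c)} := by
      intro p hp
      simp only [hF_def, Finset.coe_image, Finset.coe_range, Set.mem_image,
        Set.mem_Iio] at hp
      obtain ⟨k, hk, rfl⟩ := hp
      have hζknorm : ‖ζ ^ k‖ = 1 := by rw [norm_pow, hζnorm, one_pow]
      have hxnorm : ‖((t : ℂ)) * ζ ^ k‖ = t := by
        rw [norm_mul, hζknorm, mul_one, Complex.norm_real, Real.norm_eq_abs,
          abs_of_pos ht0]
      constructor
      · apply hball
        rw [Metric.mem_ball, dist_zero_right, Prod.norm_def]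
        apply max_lt
        · rw [hxnorm]; exact htε
        · rw [norm_neg, norm_pow, hxnorm]
          exact lt_of_le_of_lt (pow_le_of_le_one ht0.le ht1 (by norm_num)) htε
      · simp only [Set.mem_preimage, hf, Set.mem_singleton_iff, Prod.mk.injEq]
        constructor
        · ring
        · show (((t : ℂ)) * ζ ^ k) ^ 2 * -(((t : ℂ)) * ζ ^ k) ^ 3 = c
          have hk5 : (ζ ^ k) ^ 5 = 1 := by
            rw [← pow_mul, mul_comm, pow_mul, hζ5, one_pow]
          rw [hc_def]
          linear_combination (-((t : ℂ)) ^ 5) * hk5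
    have hle : 5 ≤ (U ∩ f ⁻¹' {((0 : ℂ), c)}).ncard := by
      have := Set.ncard_le_ncard hFsub hfin
      rwa [Set.ncard_coe_finset, hFcard] at this
    refine le_iSup₂_of_le ((0 : ℂ), c) hfin ?_
    exact_mod_cast hle
end

section
/- Let f : ℂ³ → ℂ³ be the monomial map f(x,y,z) = (x³y²z³, x²yz², x²y²z). Then the topological degree of the germ of f at 0 equals 1, yet f is not injective on any neighborhood of 0 (it contracts the coordinate hyperplanes to the origin); i.e. f is a strict germ. -/
/-!
Every exponent of `f(x,y,z) = (x³y²z³, x²yz², x²y²z)` is positive, so `f` contracts the union of the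
coordinate hyperplanes to `0`, and `f⁻¹(0)` is infinite. The exponent matrix has determinant `1`, so
its inverse is again an integer matrix and defines a monomial inverse of `f` on the torus `(ℂˣ)³`.
Hence every finite fiber of `f` has at most one point, while every neighborhood of `0` meets the
torus, where fibers are single points: the topological degree is `1`. The fiber `f⁻¹(0)` accumulates
at `0`, so `f` is injective on no neighborhood of `0`.
-/

open scoped ENat

/-- The topological degree of the germ at `0` of a map `f` whose representative is defined
on the domain `Ω ⊆ ℂ³`: the infimum over open neighborhoods `U ⊆ Ω` of `0` of the supremum,
over points `y` with finite fiber under `f|_U`, of the cardinality of that fiber. -/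
noncomputable def topdeg3 (Ω : Set (ℂ × ℂ × ℂ)) (f : ℂ × ℂ × ℂ → ℂ × ℂ × ℂ) : ℕ∞ :=
  ⨅ (U : Set (ℂ × ℂ × ℂ)) (_ : IsOpen U ∧ (0 : ℂ × ℂ × ℂ) ∈ U ∧ U ⊆ Ω),
    ⨆ (y : ℂ × ℂ × ℂ) (_ : (U ∩ f ⁻¹' {y}).Finite), ((U ∩ f ⁻¹' {y}).ncard : ℕ∞)

open Set Filter Topology

section TopDeg

variable {Ω : Set (ℂ × ℂ × ℂ)} {f : ℂ × ℂ × ℂ → ℂ × ℂ × ℂ}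

theorem topdeg3_le_of_ncard_le (hΩ : IsOpen Ω) (h0 : (0 : ℂ × ℂ × ℂ) ∈ Ω) {n : ℕ}
    (hfib : ∀ y, (Ω ∩ f ⁻¹' {y}).Finite → (Ω ∩ f ⁻¹' {y}).ncard ≤ n) :
    topdeg3 Ω f ≤ n :=
  (iInf₂_le Ω ⟨hΩ, h0, subset_rfl⟩).trans <|
    iSup₂_le fun y hy => by exact_mod_cast hfib y hy

theorem one_le_topdeg3
    (h : ∀ U, IsOpen U → (0 : ℂ × ℂ × ℂ) ∈ U → U ⊆ Ω → ∃ p ∈ U, (U ∩ f ⁻¹' {f p}).Finite) :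
    1 ≤ topdeg3 Ω f := by
  refine le_iInf₂ fun U ⟨hU, h0, hUΩ⟩ => ?_
  obtain ⟨p, hpU, hfin⟩ := h U hU h0 hUΩ
  have hpos : 0 < (U ∩ f ⁻¹' {f p}).ncard := (ncard_pos hfin).2 ⟨p, hpU, rfl⟩
  exact le_iSup₂_of_le (f p) hfin (by exact_mod_cast hpos)

end TopDeg

theorem ContinuousAt.exists_ne_mem {T X : Type*} [TopologicalSpace T] [TopologicalSpace X]
    {γ : T → X} {a : T} [(𝓝[≠] a).NeBot] (hγ : ContinuousAt γ a) {U : Set X}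
    (hU : U ∈ 𝓝 (γ a)) : ∃ t ≠ a, γ t ∈ U :=
  ((hγ.tendsto.mono_left (nhdsWithin_le_nhds (s := {a}ᶜ))).eventually hU).and self_mem_nhdsWithin
    |>.exists.imp fun _ ⟨htU, hta⟩ => ⟨hta, htU⟩

section Monomial

variable {K : Type*} [Field K]

def threefoldMonomial (p : K × K × K) : K × K × K :=
  (p.1 ^ 3 * p.2.1 ^ 2 * p.2.2 ^ 3, p.1 ^ 2 * p.2.1 * p.2.2 ^ 2, p.1 ^ 2 * p.2.1 ^ 2 * p.2.2)

/-- The monomial map with the inverse exponent matrix `[[-3, 4, 1], [2, -3, 0], [2, -2, -1]]`. -/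
def threefoldMonomialInv (q : K × K × K) : K × K × K :=
  (q.2.1 ^ 4 * q.2.2 / q.1 ^ 3, q.1 ^ 2 / q.2.1 ^ 3, q.1 ^ 2 / (q.2.1 ^ 2 * q.2.2))

def torus (K : Type*) [Field K] : Set (K × K × K) :=
  {p | p.1 ≠ 0 ∧ p.2.1 ≠ 0 ∧ p.2.2 ≠ 0}

theorem threefoldMonomial_eq_zero_iff {p : K × K × K} :
    threefoldMonomial p = 0 ↔ p ∉ torus K := by
  obtain ⟨x, y, z⟩ := p
  by_cases hx : x = 0 <;> by_cases hy : y = 0 <;> by_cases hz : z = 0 <;>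
    simp [threefoldMonomial, torus, Prod.ext_iff, hx, hy, hz]

theorem leftInvOn_threefoldMonomialInv :
    LeftInvOn threefoldMonomialInv threefoldMonomial (torus K) := by
  rintro ⟨x, y, z⟩ ⟨hx, hy, hz⟩
  simp only [threefoldMonomial, threefoldMonomialInv, Prod.mk.injEq]
  refine ⟨?_, ?_, ?_⟩ <;> field_simp

theorem injOn_threefoldMonomial_torus : InjOn (threefoldMonomial (K := K)) (torus K) :=
  leftInvOn_threefoldMonomialInv.injOn

theorem subsingleton_threefoldMonomial_preimage {y : K × K × K} (hy : y ≠ 0) :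
    (threefoldMonomial ⁻¹' {y}).Subsingleton := by
  have hmem {p} (hp : p ∈ threefoldMonomial ⁻¹' {y}) : p ∈ torus K := by
    by_contra hpT
    exact hy (hp.symm.trans (threefoldMonomial_eq_zero_iff.2 hpT))
  exact fun p hp q hq => injOn_threefoldMonomial_torus (hmem hp) (hmem hq) (hp.trans hq.symm)

theorem infinite_threefoldMonomial_preimage_zero [Infinite K] :
    (threefoldMonomial ⁻¹' {(0 : K × K × K)}).Infinite :=
  infinite_of_injective_forall_mem (f := fun s : K => ((0 : K), s, (0 : K)))
    (fun _ _ h => congrArg (fun p : K × K × K => p.2.1) h)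
    fun _ => threefoldMonomial_eq_zero_iff.2 fun h => h.1 rfl

end Monomial

/-- The monomial map `f(x,y,z) = (x³y²z³, x²yz², x²y²z)` has topological
degree `1` at the origin, yet it is not injective on any neighborhood of `0`: it is a strict
germ. -/
theorem monomial_threefold_is_strict
    (f : ℂ × ℂ × ℂ → ℂ × ℂ × ℂ)
    (hf : ∀ p : ℂ × ℂ × ℂ,
      f p = (p.1 ^ 3 * p.2.1 ^ 2 * p.2.2 ^ 3,
             p.1 ^ 2 * p.2.1 * p.2.2 ^ 2,
             p.1 ^ 2 * p.2.1 ^ 2 * p.2.2)) :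
    topdeg3 Set.univ f = 1 ∧
    ∀ V : Set (ℂ × ℂ × ℂ), IsOpen V → (0 : ℂ × ℂ × ℂ) ∈ V → ¬ Set.InjOn f V := by
  obtain rfl : f = threefoldMonomial := funext hf
  refine ⟨le_antisymm ?_ ?_, ?_⟩
  · refine topdeg3_le_of_ncard_le isOpen_univ (mem_univ 0) fun y hfin => ?_
    rw [univ_inter] at hfin ⊢
    obtain rfl | hy := eq_or_ne y 0
    · exact absurd hfin infinite_threefoldMonomial_preimage_zero
    · exact (ncard_le_one hfin).2 (subsingleton_threefoldMonomial_preimage hy)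
  · refine one_le_topdeg3 fun U hU h0 _ => ?_
    have hdiag : Continuous fun t : ℂ => (t, t, t) := by fun_prop
    obtain ⟨t, ht, htU⟩ := hdiag.continuousAt.exists_ne_mem (a := 0) (hU.mem_nhds h0)
    have hne : threefoldMonomial (t, t, t) ≠ 0 :=
      threefoldMonomial_eq_zero_iff.not_left.2 ⟨ht, ht, ht⟩
    exact ⟨_, htU, (subsingleton_threefoldMonomial_preimage hne).finite.inter_of_right U⟩
  · intro V hV h0 hinj
    have haxis : Continuous fun t : ℂ => (t, (0 : ℂ), (0 : ℂ)) := by fun_prop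
    obtain ⟨t, ht, htV⟩ := haxis.continuousAt.exists_ne_mem (a := 0) (hV.mem_nhds h0)
    have hfib : threefoldMonomial (t, (0 : ℂ), (0 : ℂ)) = threefoldMonomial 0 := by
      rw [threefoldMonomial_eq_zero_iff.2 (fun h => h.2.1 rfl),
        threefoldMonomial_eq_zero_iff.2 (fun h => h.1 rfl)]
    exact ht (congrArg Prod.fst (hinj htV h0 hfib))
end

section
/- Let a, b, c, d be positive integers with ad − bc ≠ 0. In the field ℂ(x,y) of rational functions in two variables over ℂ, let L be the subfield generated over ℂ by the two monomials x^a y^b and x^c y^d. Then ℂ(x,y) is a finite extension of L of degree exactly |ad − bc|. -/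
/-!
Let `Λ ⊆ ℤ²` be the lattice spanned by the exponent vectors `(a, b)` and `(c, d)`, so that
`[ℤ² : Λ] = |ad - bc|`, and write `x^v` for the Laurent monomial with exponent `v`. Since
`x^v ∈ L` for `v ∈ Λ`, every Laurent monomial is an `L`-multiple of `x^r` with `r` among chosen
representatives of `ℤ²/Λ`. These `|ad - bc|` monomials therefore span an `L`-subalgebra of
`ℂ(x,y)`; being finite-dimensional over `L` it is a field, and it contains `x` and `y`, so it is
all of `ℂ(x,y)`. Conversely, every character `χ` of `ℤ²/Λ` defines the scaling automorphism
`x^v ↦ χ(v) x^v`, which fixes `L`. As `ℂ` has all roots of unity there are `|ℤ²/Λ|` characters,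
they give distinct `L`-automorphisms, and by Dedekind's independence of characters there are at
most `[ℂ(x,y) : L]` of those.
-/

open MvPolynomial Module

theorem card_quotient_span_range_eq_natAbs_det {ι : Type*} [Fintype ι] [DecidableEq ι]
    (v : ι → ι → ℤ) (hv : (Matrix.of v).det ≠ 0) :
    Nat.card ((ι → ℤ) ⧸ Submodule.span ℤ (Set.range v)) = (Matrix.of v).det.natAbs := by
  have hli : LinearIndependent ℤ v := Matrix.linearIndependent_rows_of_det_ne_zero hv
  rw [← Submodule.natAbs_det_basis_change (Pi.basisFun ℤ ι) _ (Basis.span hli), Basis.det_apply,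
    ← Matrix.det_transpose]
  congr 2
  ext i j
  simp [Basis.toMatrix_apply, Basis.span_apply]

section LaurentMonomial

variable {ι G H : Type*} [Fintype ι] [CommGroup G] [CommGroup H]

def laurentMonomial (x : ι → G) (v : ι → ℤ) : G := ∏ i, x i ^ v i

lemma laurentMonomial_zero (x : ι → G) : laurentMonomial x 0 = 1 := by
  simp [laurentMonomial]

lemma laurentMonomial_add (x : ι → G) (v w : ι → ℤ) :
    laurentMonomial x (v + w) = laurentMonomial x v * laurentMonomial x w := by
  simp [laurentMonomial, zpow_add, Finset.prod_mul_distrib]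

lemma laurentMonomial_zsmul (x : ι → G) (n : ℤ) (v : ι → ℤ) :
    laurentMonomial x (n • v) = laurentMonomial x v ^ n := by
  simp [laurentMonomial, Finset.prod_zpow, mul_comm n, zpow_mul]

lemma laurentMonomial_mul (x y : ι → G) (v : ι → ℤ) :
    laurentMonomial (x * y) v = laurentMonomial x v * laurentMonomial y v := by
  simp [laurentMonomial, mul_zpow, Finset.prod_mul_distrib]

lemma map_laurentMonomial (f : G →* H) (x : ι → G) (v : ι → ℤ) :
    f (laurentMonomial x v) = laurentMonomial (f ∘ x) v := by
  simp [laurentMonomial]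

lemma laurentMonomial_single [DecidableEq ι] (x : ι → G) (i : ι) :
    laurentMonomial x (Pi.single i 1) = x i := by
  simp [laurentMonomial, Pi.single_apply]

lemma MonoidHom.apply_ofAdd_eq_laurentMonomial [DecidableEq ι]
    (φ : Multiplicative (ι → ℤ) →* G) (v : ι → ℤ) :
    φ (.ofAdd v) = laurentMonomial (fun i => φ (.ofAdd (Pi.single i 1))) v := by
  simp only [laurentMonomial, ← map_zpow, ← ofAdd_zsmul, ← map_prod, ← ofAdd_sum]
  congr
  ext j
  simp [Pi.single_apply]

end LaurentMonomial

lemma IntermediateField.coe_laurentMonomial_mem_of_mem_span {F K ι : Type*} [Field F] [Field K]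
    [Algebra F K] [Fintype ι] (L : IntermediateField F K) (x : ι → Kˣ) {s : Set (ι → ℤ)}
    (hs : ∀ v ∈ s, ↑(laurentMonomial x v) ∈ L) {v : ι → ℤ}
    (hv : v ∈ Submodule.span ℤ s) : ↑(laurentMonomial x v) ∈ L := by
  induction hv using Submodule.span_induction with
  | mem v hv => exact hs v hv
  | zero => simp [laurentMonomial_zero]
  | add v w _ _ hv hw => simpa [laurentMonomial_add] using L.mul_mem hv hw
  | smul n v _ hv =>
    rw [laurentMonomial_zsmul, Units.val_zpow_eq_zpow_val]
    exact zpow_mem hv n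

lemma Subalgebra.eq_top_of_fg_of_adjoin_eq_top {L K : Type*} [Field L] [Field K] [Algebra L K]
    (S : Subalgebra L K) (hS : (Subalgebra.toSubmodule S).FG) {s : Set K} (hsS : s ⊆ S)
    (hs : IntermediateField.adjoin L s = ⊤) : S = ⊤ := by
  have halg : ∀ z ∈ s, IsAlgebraic L z := fun z hz =>
    (IsIntegral.of_mem_of_fg S hS z (hsS hz)).isAlgebraic
  rw [eq_top_iff, ← IntermediateField.top_toSubalgebra, ← hs,
    IntermediateField.adjoin_toSubalgebra_of_isAlgebraic halg]
  exact Algebra.adjoin_le hsS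

section UpperBound

variable {F K ι : Type*} [Field F] [Field K] [Algebra F K] [Fintype ι]
  (L : IntermediateField F K) (x : ι → Kˣ) (Λ : Submodule ℤ (ι → ℤ))

def monomialSpan : Submodule L K :=
  Submodule.span L (Set.range fun q : (ι → ℤ) ⧸ Λ => (↑(laurentMonomial x q.out) : K))

variable {L x Λ}

lemma laurentMonomial_mem_monomialSpan (hΛ : ∀ v ∈ Λ, ↑(laurentMonomial x v) ∈ L)
    (v : ι → ℤ) : ↑(laurentMonomial x v) ∈ monomialSpan L x Λ := by
  set r := (Submodule.Quotient.mk v : (ι → ℤ) ⧸ Λ).out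
  have hvr : v - r ∈ Λ := (Submodule.Quotient.eq Λ).1 (Quotient.out_eq _).symm
  have hv : (↑(laurentMonomial x v) : K) =
      (⟨_, hΛ _ hvr⟩ : L) • (↑(laurentMonomial x r) : K) := by
    change _ = (↑(laurentMonomial x (v - r)) : K) * _
    rw [← Units.val_mul, ← laurentMonomial_add, sub_add_cancel]
  rw [hv]
  exact Submodule.smul_mem _ _ (Submodule.subset_span ⟨_, rfl⟩)

lemma monomialSpan_mul_le (hΛ : ∀ v ∈ Λ, ↑(laurentMonomial x v) ∈ L) :
    monomialSpan L x Λ * monomialSpan L x Λ ≤ monomialSpan L x Λ := by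
  rw [monomialSpan, Submodule.span_mul_span, Submodule.span_le]
  rintro _ ⟨_, ⟨q, rfl⟩, _, ⟨q', rfl⟩, rfl⟩
  dsimp only
  rw [← Units.val_mul, ← laurentMonomial_add]
  exact laurentMonomial_mem_monomialSpan hΛ _

theorem monomialSpan_eq_top [Finite ((ι → ℤ) ⧸ Λ)] (hΛ : ∀ v ∈ Λ, ↑(laurentMonomial x v) ∈ L)
    (hx : IntermediateField.adjoin L (Set.range fun i => (x i : K)) = ⊤) :
    monomialSpan L x Λ = ⊤ := by
  classical
  let S : Subalgebra L K := (monomialSpan L x Λ).toSubalgebra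
    (by simpa [laurentMonomial_zero] using laurentMonomial_mem_monomialSpan hΛ 0)
    (fun _ _ hz hw => monomialSpan_mul_le hΛ (Submodule.mul_mem_mul hz hw))
  have hS : S = ⊤ := by
    refine S.eq_top_of_fg_of_adjoin_eq_top (Submodule.fg_span (Set.finite_range _)) ?_ hx
    rintro _ ⟨i, rfl⟩
    have := laurentMonomial_mem_monomialSpan hΛ (Pi.single i 1)
    rwa [laurentMonomial_single] at this
  simpa [S] using congr_arg Subalgebra.toSubmodule hS

theorem finiteDimensional_and_finrank_le_card_quotient [Finite ((ι → ℤ) ⧸ Λ)]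
    (hΛ : ∀ v ∈ Λ, ↑(laurentMonomial x v) ∈ L)
    (hx : IntermediateField.adjoin L (Set.range fun i => (x i : K)) = ⊤) :
    FiniteDimensional L K ∧ finrank L K ≤ Nat.card ((ι → ℤ) ⧸ Λ) := by
  have := Fintype.ofFinite ((ι → ℤ) ⧸ Λ)
  have htop := monomialSpan_eq_top hΛ hx
  refine ⟨⟨htop ▸ Submodule.fg_span (Set.finite_range _)⟩, ?_⟩
  rw [← finrank_top, ← htop, Nat.card_eq_fintype_card]
  exact finrank_range_le_card _

end UpperBound

namespace MvPolynomial

noncomputable section Scaling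

variable (k : Type*) {ι : Type*} [Field k]

local notation "𝕂" => FractionRing (MvPolynomial ι k)

def fracX (i : ι) : 𝕂ˣ :=
  Units.mk0 (algebraMap _ _ (X i)) (IsFractionRing.to_map_ne_zero_of_mem_nonZeroDivisors
    (mem_nonZeroDivisors_of_ne_zero (X_ne_zero (R := k) i)))

lemma adjoin_range_fracX :
    IntermediateField.adjoin k (Set.range fun i : ι => (fracX k i : 𝕂)) = ⊤ := by
  rw [← IsFractionRing.algHom_fieldRange_eq_of_comp_eq_of_range_eq (f := AlgHom.id k 𝕂)
    (g := IsScalarTower.toAlgHom k (MvPolynomial ι k) 𝕂) rfl]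
  · exact eq_top_iff.2 fun z _ => AlgHom.mem_fieldRange.2 ⟨z, rfl⟩
  · rw [← Algebra.map_top, ← adjoin_range_X, AlgHom.map_adjoin, ← Set.range_comp]
    rfl

variable {k}

def scaleAlgEquiv (c : ι → kˣ) : MvPolynomial ι k ≃ₐ[k] MvPolynomial ι k :=
  AlgEquiv.ofAlgHom (aeval fun i => (c i : k) • X i) (aeval fun i => (c i : k)⁻¹ • X i)
    (algHom_ext fun i => by simp [smul_smul]) (algHom_ext fun i => by simp [smul_smul])

def scaleFrac (c : ι → kˣ) : 𝕂 ≃ₐ[k] 𝕂 := IsFractionRing.algEquivOfAlgEquiv (scaleAlgEquiv c)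

lemma scaleFrac_fracX (c : ι → kˣ) (i : ι) :
    scaleFrac c (fracX k i : 𝕂) = algebraMap k 𝕂 (c i) * fracX k i := by
  simp [scaleFrac, fracX, scaleAlgEquiv, IsFractionRing.algEquivOfAlgEquiv_algebraMap,
    Algebra.smul_def, IsScalarTower.algebraMap_apply k (MvPolynomial ι k) 𝕂]

lemma scaleFrac_injective : Function.Injective (scaleFrac : (ι → kˣ) → 𝕂 ≃ₐ[k] 𝕂) := by
  intro c c' h
  funext i
  have := DFunLike.congr_fun h (fracX k i : 𝕂)
  rw [scaleFrac_fracX, scaleFrac_fracX] at this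
  exact Units.ext ((algebraMap k 𝕂).injective (mul_right_cancel₀ (fracX k i).ne_zero this))

lemma scaleFrac_laurentMonomial [Fintype ι] (c : ι → kˣ) (v : ι → ℤ) :
    scaleFrac c ↑(laurentMonomial (fracX k) v) =
      algebraMap k 𝕂 ↑(laurentMonomial c v) * ↑(laurentMonomial (fracX k) v) := by
  have h := map_laurentMonomial (Units.map (scaleFrac c : 𝕂 →* 𝕂)) (fracX k) v
  have hx : Units.map (scaleFrac c : 𝕂 →* 𝕂) ∘ fracX k =
      Units.map (algebraMap k 𝕂 : k →* 𝕂) ∘ c * fracX k := by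
    funext i
    ext
    simp [scaleFrac_fracX]
  rw [hx, laurentMonomial_mul, ← map_laurentMonomial] at h
  simpa using congr_arg Units.val h

lemma scaleFrac_eq_self_of_mem_adjoin [Fintype ι] {s : Set (ι → ℤ)} {c : ι → kˣ}
    (hc : ∀ v ∈ s, laurentMonomial c v = 1) {z : 𝕂}
    (hz : z ∈ IntermediateField.adjoin k ((fun v => (↑(laurentMonomial (fracX k) v) : 𝕂)) '' s)) :
    scaleFrac c z = z := by
  suffices (scaleFrac c).toAlgHom.comp (IntermediateField.val _) = IntermediateField.val _ by
    simpa using DFunLike.congr_fun this ⟨z, hz⟩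
  refine IntermediateField.adjoin_algHom_ext k ?_
  rintro _ ⟨v, hv, rfl⟩
  simp [scaleFrac_laurentMonomial, hc v hv]

section Characters

variable [Fintype ι] [DecidableEq ι] (Λ : Submodule ℤ (ι → ℤ))

def characterScaling (χ : Multiplicative ((ι → ℤ) ⧸ Λ) →* kˣ) (i : ι) : kˣ :=
  χ (.ofAdd (Submodule.Quotient.mk (Pi.single i 1)))

lemma laurentMonomial_characterScaling (χ : Multiplicative ((ι → ℤ) ⧸ Λ) →* kˣ) (v : ι → ℤ) :
    laurentMonomial (characterScaling Λ χ) v = χ (.ofAdd (Submodule.Quotient.mk v)) :=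
  ((χ.comp (AddMonoidHom.toMultiplicative Λ.mkQ.toAddMonoidHom)).apply_ofAdd_eq_laurentMonomial
    v).symm

lemma characterScaling_injective : Function.Injective (characterScaling (k := k) Λ) := by
  intro χ χ' h
  refine MonoidHom.ext fun q => ?_
  obtain ⟨v, hv⟩ := Submodule.Quotient.mk_surjective Λ q.toAdd
  rw [← ofAdd_toAdd q, ← hv, ← laurentMonomial_characterScaling, h, laurentMonomial_characterScaling]

theorem card_quotient_le_finrank [IsAlgClosed k] [CharZero k] (s : Set (ι → ℤ))
    [Finite ((ι → ℤ) ⧸ Submodule.span ℤ s)] (L : IntermediateField k 𝕂)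
    (hL : L = IntermediateField.adjoin k ((fun v => (↑(laurentMonomial (fracX k) v) : 𝕂)) '' s))
    [FiniteDimensional L 𝕂] :
    Nat.card ((ι → ℤ) ⧸ Submodule.span ℤ s) ≤ finrank L 𝕂 := by
  set Q := (ι → ℤ) ⧸ Submodule.span ℤ s
  have : NeZero (Monoid.exponent (Multiplicative Q)) := ⟨Monoid.exponent_ne_zero_of_finite⟩
  obtain ⟨e⟩ := CommGroup.monoidHom_mulEquiv_of_hasEnoughRootsOfUnity (Multiplicative Q) k
  have hfix (χ : Multiplicative Q →* kˣ) :
      scaleFrac (characterScaling _ χ) ∈ L.fixingSubgroup := by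
    rw [IntermediateField.mem_fixingSubgroup_iff]
    intro z hz
    refine scaleFrac_eq_self_of_mem_adjoin (fun v hv => ?_) (hL ▸ hz)
    rw [laurentMonomial_characterScaling,
      (Submodule.Quotient.mk_eq_zero _).2 (Submodule.subset_span hv), ofAdd_zero, map_one]
  let Φ (χ : Multiplicative Q →* kˣ) : 𝕂 →ₐ[L] 𝕂 :=
    (IntermediateField.fixingSubgroupEquiv L ⟨_, hfix χ⟩ : 𝕂 ≃ₐ[L] 𝕂)
  have hΦ : Function.Injective Φ := fun χ χ' h => characterScaling_injective _
    (scaleFrac_injective (AlgEquiv.ext fun z => DFunLike.congr_fun h z))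
  calc Nat.card Q = Nat.card (Multiplicative Q →* kˣ) := (Nat.card_congr e.toEquiv).symm
    _ ≤ Nat.card (𝕂 →ₐ[L] 𝕂) := Nat.card_le_card_of_injective Φ hΦ
    _ ≤ finrank L 𝕂 := card_algHom_le_finrank L 𝕂 𝕂

theorem finrank_adjoin_laurentMonomial [IsAlgClosed k] [CharZero k] (s : Set (ι → ℤ))
    [Finite ((ι → ℤ) ⧸ Submodule.span ℤ s)] (L : IntermediateField k 𝕂)
    (hL : L = IntermediateField.adjoin k ((fun v => (↑(laurentMonomial (fracX k) v) : 𝕂)) '' s)) :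
    FiniteDimensional L 𝕂 ∧ finrank L 𝕂 = Nat.card ((ι → ℤ) ⧸ Submodule.span ℤ s) := by
  have hs : ∀ v ∈ s, ↑(laurentMonomial (fracX k) v) ∈ L := fun v hv =>
    hL ▸ IntermediateField.subset_adjoin _ _ ⟨v, hv, rfl⟩
  obtain ⟨hfin, hle⟩ := finiteDimensional_and_finrank_le_card_quotient
    (fun v hv => L.coe_laurentMonomial_mem_of_mem_span _ hs hv)
    (IntermediateField.adjoin_eq_top_of_adjoin_eq_top k (adjoin_range_fracX k))
  exact ⟨hfin, hle.antisymm (card_quotient_le_finrank s L hL)⟩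

end Characters

end Scaling

end MvPolynomial

theorem degree_over_monomial_subfield_general
    (a b c d : ℕ)
    (hdet : (a : ℤ) * d - (b : ℤ) * c ≠ 0)
    (x y : FractionRing (MvPolynomial (Fin 2) ℂ))
    (hx : x = algebraMap (MvPolynomial (Fin 2) ℂ) _ (X 0))
    (hy : y = algebraMap (MvPolynomial (Fin 2) ℂ) _ (X 1))
    (L : IntermediateField ℂ (FractionRing (MvPolynomial (Fin 2) ℂ)))
    (hL : L = IntermediateField.adjoin ℂ ({x ^ a * y ^ b, x ^ c * y ^ d} :
      Set (FractionRing (MvPolynomial (Fin 2) ℂ)))) :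
    FiniteDimensional L (FractionRing (MvPolynomial (Fin 2) ℂ)) ∧
    Module.finrank L (FractionRing (MvPolynomial (Fin 2) ℂ)) =
      ((a : ℤ) * d - (b : ℤ) * c).natAbs := by
  let rows : Fin 2 → Fin 2 → ℤ := ![![a, b], ![c, d]]
  have hdet_rows : (Matrix.of rows).det = a * d - b * c := Matrix.det_fin_two_of _ _ _ _
  have hcard := card_quotient_span_range_eq_natAbs_det rows (hdet_rows ▸ hdet)
  have : Finite ((Fin 2 → ℤ) ⧸ Submodule.span ℤ (Set.range rows)) :=
    Nat.finite_of_card_ne_zero (by rw [hcard, hdet_rows]; exact Int.natAbs_ne_zero.2 hdet)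
  have hgen : L = IntermediateField.adjoin ℂ
      ((fun v => (↑(laurentMonomial (fracX ℂ) v) : FractionRing (MvPolynomial (Fin 2) ℂ))) ''
        Set.range rows) := by
    rw [hL, hx, hy, Matrix.range_cons, Matrix.range_cons, Matrix.range_empty]
    simp [Set.image_insert_eq, laurentMonomial, fracX, Set.pair_comm]
  obtain ⟨hfin, hrank⟩ := finrank_adjoin_laurentMonomial _ L hgen
  exact ⟨hfin, by rw [hrank, hcard, hdet_rows]⟩

/-- In `ℂ(x,y)`, the fraction field of `ℂ[x,y]`, let `L` be the subfield
generated over `ℂ` by the monomials `x^a y^b` and `x^c y^d`, where `a, b, c, d` are positive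
integers with `ad - bc ≠ 0`. Then `ℂ(x,y)` is a finite extension of `L` of degree `|ad - bc|`. -/
theorem degree_over_monomial_subfield
    (a b c d : ℕ) (ha : 0 < a) (hb : 0 < b) (hc : 0 < c) (hd : 0 < d)
    (hdet : (a : ℤ) * d - (b : ℤ) * c ≠ 0)
    (x y : FractionRing (MvPolynomial (Fin 2) ℂ))
    (hx : x = algebraMap (MvPolynomial (Fin 2) ℂ) _ (X 0))
    (hy : y = algebraMap (MvPolynomial (Fin 2) ℂ) _ (X 1))
    (L : IntermediateField ℂ (FractionRing (MvPolynomial (Fin 2) ℂ)))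
    (hL : L = IntermediateField.adjoin ℂ ({x ^ a * y ^ b, x ^ c * y ^ d} :
      Set (FractionRing (MvPolynomial (Fin 2) ℂ)))) :
    FiniteDimensional L (FractionRing (MvPolynomial (Fin 2) ℂ)) ∧
    Module.finrank L (FractionRing (MvPolynomial (Fin 2) ℂ)) =
      ((a : ℤ) * d - (b : ℤ) * c).natAbs :=
  degree_over_monomial_subfield_general a b c d hdet x y hx hy L hL
end

section
/- Let a ≥ 2, c ≥ 1 and k ≥ 1 be integers. In the field ℂ(z,w) of rational functions in two variables over ℂ, let L be the subfield generated over ℂ by z^a and z^c w + z^k. Then ℂ(z,w) is a finite extension of L of degree exactly a. -/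
/-!
Write `u = z^a` and `v = z^c w + z^k`. Since `w = (v - z^k) / z^c`, the field `ℂ(z, w)` is
`L(z)`, and `z` is a root of `X^a - u ∈ L[X]`, so the degree is at most `a`. For the reverse
bound, `1, z, …, z^(a-1)` are linearly independent over `L`: clearing denominators, a relation
`∑ P_i(u, v) z^i = 0` with polynomials `P_i` becomes, under `z ↦ t, w ↦ (X - t^k) / t^c`
over `ℂ(t)`, the relation `∑ P_i(t^a, X) t^i = 0`, and the exponents of `t` in the `i`-th
summand all lie in `i + aℕ`, so every `P_i` vanishes.
-/

open MvPolynomial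

open scoped Polynomial

namespace Polynomial

theorem eq_zero_of_sum_expand_mul_X_pow_eq_zero {R : Type*} [CommSemiring R] {a : ℕ}
    {g : Fin a → R[X]} (h : ∑ i : Fin a, expand R a (g i) * X ^ (i : ℕ) = 0) (i : Fin a) :
    g i = 0 := by
  have ha : 0 < a := i.pos
  ext m
  have hcoeff := congrArg (coeff · (a * m + i)) h
  simp only [finsetSum_coeff, coeff_zero, coeff_mul_X_pow', coeff_expand ha] at hcoeff
  rwa [Fintype.sum_eq_single i, if_pos (by omega), if_pos (by simp), Nat.add_sub_cancel,
    Nat.mul_div_cancel_left m ha] at hcoeff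
  intro j hji
  split_ifs with hle hdvd <;> try rfl
  obtain ⟨e, he⟩ := hdvd
  have hmod := congrArg (· % a) (show a * m + i = a * e + j by omega)
  simp only [Nat.mul_add_mod, Nat.mod_eq_of_lt i.isLt, Nat.mod_eq_of_lt j.isLt] at hmod
  exact absurd (Fin.ext hmod).symm hji

end Polynomial

namespace MvPolynomial

theorem aeval_C_X_X_injective {R : Type*} [CommSemiring R] :
    Function.Injective (aeval ![Polynomial.C Polynomial.X, Polynomial.X] :
      MvPolynomial (Fin 2) R →ₐ[R] R[X][X]) := by
  have hinv : (Polynomial.aevalTower (Polynomial.aeval (X 0)) (X 1)).comp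
      (aeval ![Polynomial.C Polynomial.X, Polynomial.X]) = AlgHom.id R (MvPolynomial (Fin 2) R) :=
    algHom_ext fun i => by fin_cases i <;> simp
  exact Function.LeftInverse.injective (AlgHom.congr_fun hinv)

/-- The pullback `f_k^*` along the germ `f_k(z, w) = (z^a, z^c w + z^k)`. -/
noncomputable def classFourPullback (R : Type*) [CommSemiring R] (a c k : ℕ) :
    MvPolynomial (Fin 2) R →ₐ[R] MvPolynomial (Fin 2) R :=
  aeval ![X 0 ^ a, X 0 ^ c * X 1 + X 0 ^ k]

/-- Inverts the second component of `f_k`: sends `z^c w + z^k` to `X`. -/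
noncomputable def classFourStraightening (F : Type*) [Field F] (c k : ℕ) :
    MvPolynomial (Fin 2) F →ₐ[F] (RatFunc F)[X] :=
  aeval ![Polynomial.C RatFunc.X,
    Polynomial.C (RatFunc.X ^ c)⁻¹ * (Polynomial.X - Polynomial.C (RatFunc.X ^ k))]

variable {F : Type*} [Field F]

theorem classFourStraightening_comp_classFourPullback (a c k : ℕ) :
    (classFourStraightening F c k).comp (classFourPullback F a c k) =
    (Polynomial.mapAlgHom ((IsScalarTower.toAlgHom F F[X] (RatFunc F)).comp
      (Polynomial.expand F a))).comp (aeval ![Polynomial.C Polynomial.X, Polynomial.X]) := by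
  have hX : (RatFunc.X : RatFunc F) ^ c ≠ 0 := pow_ne_zero _ RatFunc.X_ne_zero
  refine algHom_ext fun i => ?_
  fin_cases i
  · simp [classFourStraightening, classFourPullback]
  · simp only [classFourStraightening, classFourPullback, Fin.mk_one, AlgHom.comp_apply,
      aeval_X, Matrix.cons_val_one, Matrix.cons_val_zero, map_add, map_mul, map_pow]
    rw [← Polynomial.C_pow, ← mul_assoc, ← Polynomial.C_mul, mul_inv_cancel₀ hX,
      Polynomial.C_1, one_mul, Polynomial.coe_mapAlgHom, Polynomial.map_X]
    ring

theorem eq_zero_of_sum_classFourPullback_mul_X_pow_eq_zero {a c k : ℕ}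
    {P : Fin a → MvPolynomial (Fin 2) F}
    (h : ∑ i, classFourPullback F a c k (P i) * X 0 ^ (i : ℕ) = 0) (i : Fin a) : P i = 0 := by
  set σ : MvPolynomial (Fin 2) F →ₐ[F] F[X][X] :=
    aeval ![Polynomial.C Polynomial.X, Polynomial.X]
  refine aeval_C_X_X_injective (Polynomial.ext fun n => ?_)
  rw [map_zero, Polynomial.coeff_zero]
  refine Polynomial.eq_zero_of_sum_expand_mul_X_pow_eq_zero
    (g := fun j => (σ (P j)).coeff n) ?_ i
  apply IsFractionRing.injective F[X] (RatFunc F)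
  have hθ j := AlgHom.congr_fun (classFourStraightening_comp_classFourPullback a c k) (P j)
  have := congrArg (Polynomial.coeff · n) (congrArg (classFourStraightening F c k) h)
  simp only [map_sum, map_mul, ← AlgHom.comp_apply, hθ] at this
  simp only [classFourStraightening, map_pow, aeval_X, Matrix.cons_val_zero,
    Polynomial.finsetSum_coeff] at this
  simp only [← Polynomial.C_pow, Polynomial.coeff_mul_C] at this
  simpa [σ] using this

end MvPolynomial

namespace IntermediateField

open algebraAdjoinAdjoin in
theorem linearIndependent_adjoin_range_of_aeval {F K ι : Type*} [Field F] [Field K]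
    [Algebra F K] {x : ι → K} {n : ℕ} {b : Fin n → K}
    (h : ∀ P : Fin n → MvPolynomial ι F,
      ∑ i, aeval x (P i) * b i = 0 → ∀ i, aeval x (P i) = 0) :
    LinearIndependent (adjoin F (Set.range x)) b := by
  rw [← LinearIndependent.iff_fractionRing (Algebra.adjoin F (Set.range x)),
    Fintype.linearIndependent_iff]
  intro g hg
  have hP : ∀ i, ∃ P, aeval x P = g i := fun i => by
    simpa [Algebra.adjoin_range_eq_range_aeval] using (g i).2
  choose P hP using hP
  intro i
  apply Subtype.ext
  rw [← hP i]
  exact h P (by simpa [hP, Subalgebra.smul_def] using hg) i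

theorem adjoin_range_algebraMap_X_eq_top {F σ K : Type*} [Field F] [Field K] [Algebra F K]
    [Algebra (MvPolynomial σ F) K] [IsScalarTower F (MvPolynomial σ F) K]
    [IsFractionRing (MvPolynomial σ F) K] :
    adjoin F (Set.range fun i => algebraMap (MvPolynomial σ F) K (X i)) = ⊤ := by
  have hle : (Algebra.adjoin F (Set.range (X : σ → MvPolynomial σ F))).map
      (IsScalarTower.toAlgHom F _ K) ≤
      (adjoin F (Set.range fun i => algebraMap (MvPolynomial σ F) K (X i))).toSubalgebra := by
    rw [AlgHom.map_adjoin, ← Set.range_comp]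
    exact algebra_adjoin_le_adjoin F _
  have hmem (p : MvPolynomial σ F) :
      algebraMap _ K p ∈ adjoin F (Set.range fun i => algebraMap (MvPolynomial σ F) K (X i)) :=
    hle (Subalgebra.mem_map.mpr ⟨p, by simp [adjoin_range_X], rfl⟩)
  refine eq_top_iff.mpr fun y _ => ?_
  obtain ⟨p, q, -, rfl⟩ := IsFractionRing.div_surjective (A := MvPolynomial σ F) y
  exact div_mem (hmem p) (hmem q)

theorem finiteDimensional_and_finrank_eq_of_pow_eq {L K : Type*} [Field L] [Field K]
    [Algebra L K] {z : K} {u : L} {a : ℕ} (ha : 0 < a) (hz : z ^ a = algebraMap L K u)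
    (htop : L⟮z⟯ = ⊤) (hli : LinearIndependent L fun i : Fin a => z ^ (i : ℕ)) :
    FiniteDimensional L K ∧ Module.finrank L K = a := by
  have hroot : Polynomial.aeval z (Polynomial.X ^ a - Polynomial.C u) = 0 := by simp [hz]
  have hint : IsIntegral L z := ⟨_, Polynomial.monic_X_pow_sub_C u ha.ne', hroot⟩
  have hfin := adjoin.finiteDimensional hint
  have hrank := adjoin.finrank hint
  rw [htop] at hfin hrank
  rw [finrank_top'] at hrank
  have hK : FiniteDimensional L K := topEquiv.toLinearEquiv.finiteDimensional
  refine ⟨hK, le_antisymm ?_ ?_⟩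
  · calc Module.finrank L K = (minpoly L z).natDegree := hrank
      _ ≤ (Polynomial.X ^ a - Polynomial.C u).natDegree :=
        Polynomial.natDegree_le_of_dvd (minpoly.dvd L z hroot)
          (Polynomial.monic_X_pow_sub_C u ha.ne').ne_zero
      _ = a := Polynomial.natDegree_X_pow_sub_C
  · simpa using hli.fintype_card_le_finrank

theorem adjoin_simple_eq_top_of_mul_add_mem {F K : Type*} [Field F] [Field K] [Algebra F K]
    {L : IntermediateField F K} {z w : K} {c k : ℕ} (hz : z ≠ 0) (hzw : adjoin F {z, w} = ⊤)
    (hv : z ^ c * w + z ^ k ∈ L) : L⟮z⟯ = ⊤ := by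
  have hzL : z ∈ L⟮z⟯ := mem_adjoin_simple_self L z
  have hvL : z ^ c * w + z ^ k ∈ L⟮z⟯ := (L⟮z⟯).algebraMap_mem ⟨_, hv⟩
  have hwL : w ∈ L⟮z⟯ := by
    rw [show w = (z ^ c * w + z ^ k - z ^ k) / z ^ c by field_simp; ring]
    exact div_mem (sub_mem hvL (pow_mem hzL k)) (pow_mem hzL c)
  rw [← restrictScalars_eq_top_iff (K := F), eq_top_iff, ← hzw, adjoin_le_iff]
  exact Set.insert_subset hzL (Set.singleton_subset_iff.mpr hwL)

end IntermediateField

theorem linearIndependent_pow_classFour {F K : Type*} [Field F] [Field K] [Algebra F K]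
    [Algebra (MvPolynomial (Fin 2) F) K] [IsScalarTower F (MvPolynomial (Fin 2) F) K]
    [IsFractionRing (MvPolynomial (Fin 2) F) K] {a c k : ℕ} {z w : K}
    (hz : z = algebraMap (MvPolynomial (Fin 2) F) K (X 0))
    (hw : w = algebraMap (MvPolynomial (Fin 2) F) K (X 1)) :
    LinearIndependent (IntermediateField.adjoin F {z ^ a, z ^ c * w + z ^ k})
      fun i : Fin a => z ^ (i : ℕ) := by
  have hpair : ({z ^ a, z ^ c * w + z ^ k} : Set K) = Set.range ![z ^ a, z ^ c * w + z ^ k] := by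
    simp [Matrix.range_cons, Matrix.range_empty, Set.pair_comm]
  have hpull (p : MvPolynomial (Fin 2) F) : aeval ![z ^ a, z ^ c * w + z ^ k] p =
      algebraMap (MvPolynomial (Fin 2) F) K (classFourPullback F a c k p) := by
    rw [classFourPullback, ← aeval_algebraMap_apply]
    congr 1
    ext i
    fin_cases i <;> simp [hz, hw]
  rw [hpair]
  refine IntermediateField.linearIndependent_adjoin_range_of_aeval fun P hP i => ?_
  suffices P i = 0 by rw [this, map_zero]
  refine eq_zero_of_sum_classFourPullback_mul_X_pow_eq_zero (c := c) (k := k)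
    (IsFractionRing.injective (MvPolynomial (Fin 2) F) K ?_) i
  rw [map_sum, map_zero, ← hP]
  simp only [map_mul, map_pow, ← hpull, ← hz]

theorem degree_over_class_four_subfield_general
    (a c k : ℕ) (ha : 2 ≤ a)
    (z w : FractionRing (MvPolynomial (Fin 2) ℂ))
    (hz : z = algebraMap (MvPolynomial (Fin 2) ℂ) _ (X 0))
    (hw : w = algebraMap (MvPolynomial (Fin 2) ℂ) _ (X 1))
    (L : IntermediateField ℂ (FractionRing (MvPolynomial (Fin 2) ℂ)))
    (hL : L = IntermediateField.adjoin ℂ ({z ^ a, z ^ c * w + z ^ k} :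
      Set (FractionRing (MvPolynomial (Fin 2) ℂ)))) :
    FiniteDimensional L (FractionRing (MvPolynomial (Fin 2) ℂ)) ∧
    Module.finrank L (FractionRing (MvPolynomial (Fin 2) ℂ)) = a := by
  have hzw : IntermediateField.adjoin ℂ {z, w} = ⊤ := by
    rw [← IntermediateField.adjoin_range_algebraMap_X_eq_top (σ := Fin 2)]
    congr 1
    ext
    simp [Fin.exists_fin_two, hz, hw, eq_comm]
  have hz0 : z ≠ 0 := by simp [hz]
  have hu : z ^ a ∈ L := hL ▸ IntermediateField.subset_adjoin _ _ (by simp)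
  have hv : z ^ c * w + z ^ k ∈ L := hL ▸ IntermediateField.subset_adjoin _ _ (by simp)
  refine IntermediateField.finiteDimensional_and_finrank_eq_of_pow_eq (u := ⟨_, hu⟩) (by omega)
    rfl (IntermediateField.adjoin_simple_eq_top_of_mul_add_mem hz0 hzw hv) ?_
  subst hL
  exact linearIndependent_pow_classFour hz hw

/-- In `ℂ(z,w)`, the fraction field of `ℂ[z,w]`, let `L` be the subfield
generated over `ℂ` by `z^a` and `z^c w + z^k`, where `a ≥ 2`, `c ≥ 1`, `k ≥ 1` are integers.
Then `ℂ(z,w)` is a finite extension of `L` of degree exactly `a`. -/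
theorem degree_over_class_four_subfield
    (a c k : ℕ) (ha : 2 ≤ a) (hc : 1 ≤ c) (hk : 1 ≤ k)
    (z w : FractionRing (MvPolynomial (Fin 2) ℂ))
    (hz : z = algebraMap (MvPolynomial (Fin 2) ℂ) _ (X 0))
    (hw : w = algebraMap (MvPolynomial (Fin 2) ℂ) _ (X 1))
    (L : IntermediateField ℂ (FractionRing (MvPolynomial (Fin 2) ℂ)))
    (hL : L = IntermediateField.adjoin ℂ ({z ^ a, z ^ c * w + z ^ k} :
      Set (FractionRing (MvPolynomial (Fin 2) ℂ)))) :
    FiniteDimensional L (FractionRing (MvPolynomial (Fin 2) ℂ)) ∧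
    Module.finrank L (FractionRing (MvPolynomial (Fin 2) ℂ)) = a :=
  degree_over_class_four_subfield_general a c k ha z w hz hw L hL
end

section
/- Let a ≥ 2, c ≥ 1 and k ≥ 1 be integers and let f_k : ℂ² → ℂ² be the polynomial map f_k(z,w) = (z^a, z^c w + z^k). Then the topological degree of the germ of f_k at 0 equals gcd(a,k) if k ≤ c, and equals a if k > c. -/
open scoped ENat

/-!
Off the line `z = 0` a fiber of `f` is parametrised by its first coordinates, which are `a`-th
roots of `y₁`, so it has at most `a` points; fibers over `y₁ = 0` are empty or contain a piece of
the line `z = 0`. For `k > c` the `a` points `(ωt, -(ωt)^(k-c))`, `ω^a = 1`, share a fiber.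
For `k ≤ c`, two points `p, q` of a fiber satisfy `p₁ = u q₁` with `u^a = 1` and
`q₁^k (u^k - 1) = q₁^c q₂ - p₁^c p₂`. On `|z| < 1, |w| < ε/2` the right-hand side has norm
`< |q₁|^c ε ≤ |q₁|^k ε`, while the `a`-th root of unity `u^k` is `1` or at distance `≥ ε` from `1`;
so `u^k = 1`, hence `u^gcd(a,k) = 1`. The points `(ωt, 0)`, `ω^gcd(a,k) = 1`, attain this bound.
-/
open Filter Topology Polynomial

theorem topdeg_le_of_ncard_le {Ω U : Set (ℂ × ℂ)} {f : ℂ × ℂ → ℂ × ℂ} (hU : IsOpen U)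
    (h0 : (0 : ℂ × ℂ) ∈ U) (hUΩ : U ⊆ Ω) {N : ℕ}
    (h : ∀ y, (U ∩ f ⁻¹' {y}).Finite → (U ∩ f ⁻¹' {y}).ncard ≤ N) : topdeg Ω f ≤ N :=
  iInf₂_le_of_le U ⟨hU, h0, hUΩ⟩ <| iSup₂_le fun y hy => by exact_mod_cast h y hy

theorem card_le_topdeg {Ω : Set (ℂ × ℂ)} {f : ℂ × ℂ → ℂ × ℂ} {α ι : Type*} {l : Filter α}
    [l.NeBot] (s : Finset ι) (g : ι → α → ℂ × ℂ) (y : α → ℂ × ℂ)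
    (hg : ∀ i ∈ s, Tendsto (g i) l (𝓝 0))
    (h : ∀ᶠ t in l, Set.InjOn (g · t) s ∧ (∀ i ∈ s, f (g i t) = y t) ∧ (f ⁻¹' {y t}).Finite) :
    (s.card : ℕ∞) ≤ topdeg Ω f := by
  classical
  refine le_iInf₂ fun U ⟨hU, h0, _⟩ => ?_
  have hgU : ∀ᶠ t in l, ∀ i ∈ s, g i t ∈ U :=
    (eventually_all_finset s).2 fun i hi => hg i hi (hU.mem_nhds h0)
  obtain ⟨t, hgU, hinj, hfg, hfin⟩ := (hgU.and h).exists
  have hfinU : (U ∩ f ⁻¹' {y t}).Finite := hfin.subset Set.inter_subset_right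
  have hsub : ↑(s.image (g · t)) ⊆ U ∩ f ⁻¹' {y t} := by
    rw [Finset.coe_image, Set.image_subset_iff]
    exact fun i hi => ⟨hgU i hi, hfg i hi⟩
  refine le_iSup₂_of_le (y t) hfinU ?_
  rw [← Finset.card_image_of_injOn hinj, ← Set.ncard_coe_finset]
  exact_mod_cast Set.ncard_le_ncard hsub hfinU

theorem card_le_topdeg_of_forall_apply_mul_eq {Ω : Set (ℂ × ℂ)} {f : ℂ × ℂ → ℂ × ℂ}
    (s : Finset ℂ) {h : ℂ → ℂ} (hh : Continuous h) (hh0 : h 0 = 0) (y : ℂ → ℂ × ℂ)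
    (hfy : ∀ t ≠ 0, ∀ ω ∈ s, f (ω * t, h (ω * t)) = y t)
    (hfin : ∀ t ≠ 0, (f ⁻¹' {y t}).Finite) : (s.card : ℕ∞) ≤ topdeg Ω f := by
  refine card_le_topdeg (l := 𝓝[≠] 0) s (fun ω t => (ω * t, h (ω * t))) y
    (fun ω _ => ((Continuous.tendsto' (by fun_prop) 0 0 (by simp [hh0])).mono_left
      nhdsWithin_le_nhds)) ?_
  filter_upwards [self_mem_nhdsWithin] with t (ht : t ≠ 0)
  exact ⟨fun ω _ ω' _ hωω' => mul_right_cancel₀ ht (congrArg Prod.fst hωω'), hfy t ht, hfin t ht⟩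

section PowEq

variable {R : Type*} [CommRing R] [IsDomain R] {n : ℕ}

theorem finite_setOf_pow_eq (hn : n ≠ 0) (w : R) : {z : R | z ^ n = w}.Finite := by
  rw [← nthRootsFinset_toSet (Nat.pos_of_ne_zero hn)]
  exact Finset.finite_toSet _

theorem ncard_le_of_forall_pow_eq (hn : n ≠ 0) {w : R} {S : Set R} (hS : ∀ z ∈ S, z ^ n = w) :
    S.ncard ≤ n := by
  classical
  calc S.ncard ≤ (nthRootsFinset n w : Set R).ncard :=
        Set.ncard_le_ncard (by rwa [nthRootsFinset_toSet (Nat.pos_of_ne_zero hn)])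
          (Finset.finite_toSet _)
    _ ≤ n := by
      rw [Set.ncard_coe_finset, nthRootsFinset_def]
      exact (Multiset.toFinset_card_le _).trans (card_nthRoots n w)

end PowEq

theorem pow_gcd_eq_of_pow_eq {G₀ : Type*} [CommGroupWithZero G₀] {x y : G₀} (hy : y ≠ 0)
    {m n : ℕ} (hm : x ^ m = y ^ m) (hn : x ^ n = y ^ n) : x ^ m.gcd n = y ^ m.gcd n := by
  rw [← div_eq_one_iff_eq (pow_ne_zero _ hy), ← div_pow] at hm hn ⊢
  exact pow_gcd_eq_one.2 ⟨hm, hn⟩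

theorem eventually_eq_one_of_pow_eq_one {K : Type*} [NormedField K] {n : ℕ} (hn : n ≠ 0) :
    ∀ᶠ v in 𝓝 (1 : K), v ^ n = 1 → v = 1 := by
  have hclosed : IsClosed ({v : K | v ^ n = 1} \ {1}) :=
    (finite_setOf_pow_eq hn 1).sdiff.isClosed
  filter_upwards [hclosed.isOpen_compl.mem_nhds (by simp)] with v hv hvn
  by_contra hv1
  exact hv ⟨hvn, hv1⟩

def classFourMap (a c k : ℕ) (p : ℂ × ℂ) : ℂ × ℂ :=
  (p.1 ^ a, p.1 ^ c * p.2 + p.1 ^ k)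

namespace classFourMap

variable {a c k : ℕ} {U : Set (ℂ × ℂ)} {y : ℂ × ℂ}

theorem apply_zero_mk (hc : c ≠ 0) (w : ℂ) : classFourMap a c k (0, w) = (0 ^ a, 0 ^ k) := by
  simp [classFourMap, zero_pow hc]

theorem ncard_inter_fiber_of_fst_eq_zero (hc : c ≠ 0) (hU : IsOpen U) (h0 : (0 : ℂ × ℂ) ∈ U)
    (hy : y.1 = 0) : (U ∩ classFourMap a c k ⁻¹' {y}).ncard = 0 := by
  rcases (U ∩ classFourMap a c k ⁻¹' {y}).eq_empty_or_nonempty with he | ⟨⟨z, w₀⟩, -, hp⟩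
  · rw [he, Set.ncard_empty]
  have hp : classFourMap a c k (z, w₀) = y := hp
  obtain rfl : z = 0 := eq_zero_of_pow_eq_zero ((congrArg Prod.fst hp).trans hy)
  have hline : (fun w : ℂ => ((0 : ℂ), w)) '' {w | ((0 : ℂ), w) ∈ U} ⊆
      U ∩ classFourMap a c k ⁻¹' {y} := by
    rintro _ ⟨w, hw, rfl⟩
    exact ⟨hw, by rw [Set.mem_preimage, apply_zero_mk hc, ← hp, apply_zero_mk hc]; rfl⟩
  refine Set.Infinite.ncard (Set.Infinite.mono hline (Set.Infinite.image ?_ ?_))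
  · exact fun w _ w' _ h => congrArg Prod.snd h
  · exact infinite_of_mem_nhds 0 ((hU.preimage (by fun_prop)).mem_nhds h0)

theorem fst_ne_zero_of_apply_eq (ha : a ≠ 0) (hy : y.1 ≠ 0) {p : ℂ × ℂ}
    (hp : classFourMap a c k p = y) : p.1 ≠ 0 := by
  rintro hp0
  apply hy
  rw [← hp, classFourMap, hp0, zero_pow ha]

theorem injOn_fst_fiber (ha : a ≠ 0) (hy : y.1 ≠ 0) :
    Set.InjOn Prod.fst (classFourMap a c k ⁻¹' {y}) := by
  intro p hp q hq hpq
  have h2 := congrArg Prod.snd ((hp : classFourMap a c k p = y).trans hq.symm)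
  simp only [classFourMap, hpq, add_left_inj] at h2
  exact Prod.ext hpq (mul_left_cancel₀ (pow_ne_zero c (hpq ▸ fst_ne_zero_of_apply_eq ha hy hp)) h2)

theorem finite_fiber (ha : a ≠ 0) (hy : y.1 ≠ 0) : (classFourMap a c k ⁻¹' {y}).Finite := by
  refine Set.Finite.of_finite_image ((finite_setOf_pow_eq ha y.1).subset ?_) (injOn_fst_fiber ha hy)
  rintro _ ⟨p, hp, rfl⟩
  exact congrArg Prod.fst hp

theorem ncard_inter_fiber_le (ha : a ≠ 0) (hy : y.1 ≠ 0) {n : ℕ} (hn : n ≠ 0) {w : ℂ}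
    (h : ∀ p ∈ U ∩ classFourMap a c k ⁻¹' {y}, p.1 ^ n = w) :
    (U ∩ classFourMap a c k ⁻¹' {y}).ncard ≤ n := by
  rw [← ((injOn_fst_fiber ha hy).mono Set.inter_subset_right).ncard_image]
  refine ncard_le_of_forall_pow_eq hn (w := w) ?_
  rintro _ ⟨p, hp, rfl⟩
  exact h p hp

theorem topdeg_le (ha : a ≠ 0) (hc : c ≠ 0) : topdeg Set.univ (classFourMap a c k) ≤ a := by
  refine topdeg_le_of_ncard_le isOpen_univ (Set.mem_univ 0) subset_rfl fun y _ => ?_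
  by_cases hy : y.1 = 0
  · exact (ncard_inter_fiber_of_fst_eq_zero hc isOpen_univ (Set.mem_univ 0) hy).trans_le a.zero_le
  · exact ncard_inter_fiber_le ha hy ha fun p hp => congrArg Prod.fst hp.2

theorem pow_fst_eq_of_apply_eq (ha : a ≠ 0) (hkc : k ≤ c) {ε : ℝ}
    (hε : ∀ ⦃v : ℂ⦄, dist v 1 < ε → v ^ a = 1 → v = 1) {p q : ℂ × ℂ}
    (hp : p ∈ Metric.ball (0 : ℂ) 1 ×ˢ Metric.ball 0 (ε / 2))
    (hq : q ∈ Metric.ball (0 : ℂ) 1 ×ˢ Metric.ball 0 (ε / 2))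
    (hpq : classFourMap a c k p = classFourMap a c k q) (hq0 : q.1 ≠ 0) : p.1 ^ k = q.1 ^ k := by
  simp only [Set.mem_prod, mem_ball_zero_iff] at hp hq
  have h1 : p.1 ^ a = q.1 ^ a := congrArg Prod.fst hpq
  have h2 : p.1 ^ c * p.2 + p.1 ^ k = q.1 ^ c * q.2 + q.1 ^ k := congrArg Prod.snd hpq
  set r := ‖q.1‖
  have hr : 0 < r := norm_pos_iff.2 hq0
  have hnorm : ‖p.1‖ = r :=
    (pow_left_inj₀ (norm_nonneg _) (norm_nonneg _) ha).1 (by rw [← norm_pow, h1, norm_pow])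
  set v := (p.1 / q.1) ^ k with hv_def
  have hv : v ^ a = 1 := by
    rw [← pow_mul, mul_comm, pow_mul, div_pow, h1, div_self (pow_ne_zero _ hq0), one_pow]
  have hdiff : p.1 ^ k - q.1 ^ k = q.1 ^ k * (v - 1) := by
    rw [hv_def, div_pow, mul_sub, mul_div_cancel₀ _ (pow_ne_zero _ hq0), mul_one]
  suffices hvε : ‖v - 1‖ < ε by
    rw [← sub_eq_zero, hdiff, hε (by rwa [dist_eq_norm]) hv, sub_self, mul_zero]
  have hrc : 0 < r ^ c := pow_pos hr c
  have hε0 : 0 ≤ ε := by linarith [norm_nonneg q.2]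
  refine lt_of_mul_lt_mul_left ?_ (pow_nonneg hr.le k)
  calc r ^ k * ‖v - 1‖ = ‖q.1 ^ c * q.2 - p.1 ^ c * p.2‖ := by
        rw [← norm_pow, ← norm_mul, ← hdiff]; congr 1; linear_combination h2
    _ ≤ r ^ c * ‖q.2‖ + r ^ c * ‖p.2‖ := by
        refine (norm_sub_le _ _).trans_eq ?_
        rw [norm_mul, norm_mul, norm_pow, norm_pow, hnorm]
    _ < r ^ c * (ε / 2) + r ^ c * (ε / 2) := by gcongr <;> linarith
    _ = r ^ c * ε := by ring
    _ ≤ r ^ k * ε := mul_le_mul_of_nonneg_right (pow_le_pow_of_le_one hr.le hq.1.le hkc) hε0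

theorem topdeg_le_gcd (ha : a ≠ 0) (hc : c ≠ 0) (hkc : k ≤ c) :
    topdeg Set.univ (classFourMap a c k) ≤ a.gcd k := by
  obtain ⟨ε, hε, hiso⟩ := Metric.eventually_nhds_iff.1 (eventually_eq_one_of_pow_eq_one (K := ℂ) ha)
  set U := Metric.ball (0 : ℂ) 1 ×ˢ Metric.ball (0 : ℂ) (ε / 2)
  have hU : IsOpen U := Metric.isOpen_ball.prod Metric.isOpen_ball
  have h0 : (0 : ℂ × ℂ) ∈ U := by simp [U, hε]
  refine topdeg_le_of_ncard_le hU h0 (Set.subset_univ U) fun y _ => ?_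
  by_cases hy : y.1 = 0
  · exact (ncard_inter_fiber_of_fst_eq_zero hc hU h0 hy).trans_le (Nat.zero_le _)
  rcases (U ∩ classFourMap a c k ⁻¹' {y}).eq_empty_or_nonempty with he | ⟨q, hqU, hq⟩
  · rw [he, Set.ncard_empty]
    exact Nat.zero_le _
  have hq0 := fst_ne_zero_of_apply_eq ha hy hq
  refine ncard_inter_fiber_le ha hy (Nat.gcd_ne_zero_left ha) (w := q.1 ^ a.gcd k) ?_
  rintro p ⟨hpU, hp⟩
  have hpq : classFourMap a c k p = classFourMap a c k q := hp.trans hq.symm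
  exact pow_gcd_eq_of_pow_eq hq0 (congrArg Prod.fst hpq)
    (pow_fst_eq_of_apply_eq ha hkc hiso hpU hqU hpq hq0)

theorem gcd_le_topdeg (ha : a ≠ 0) : (a.gcd k : ℕ∞) ≤ topdeg Set.univ (classFourMap a c k) := by
  have hd : 0 < a.gcd k := Nat.gcd_pos_of_pos_left k (Nat.pos_of_ne_zero ha)
  rw [← (Complex.isPrimitiveRoot_exp _ hd.ne').card_nthRootsFinset]
  refine card_le_topdeg_of_forall_apply_mul_eq _ continuous_const rfl (fun t => (t ^ a, t ^ k))
    (fun t _ ω hω => ?_) fun t ht => finite_fiber ha (pow_ne_zero a ht)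
  have hω : ∀ m, a.gcd k ∣ m → ω ^ m = 1 := by
    rintro _ ⟨j, rfl⟩
    rw [pow_mul, (mem_nthRootsFinset hd 1).1 hω, one_pow]
  simp only [classFourMap, mul_zero, zero_add, mul_pow, hω a (Nat.gcd_dvd_left a k),
    hω k (Nat.gcd_dvd_right a k), one_mul]

theorem le_topdeg (ha : a ≠ 0) (hck : c < k) :
    (a : ℕ∞) ≤ topdeg Set.univ (classFourMap a c k) := by
  calc (a : ℕ∞) = (nthRootsFinset a (1 : ℂ)).card := by
        rw [(Complex.isPrimitiveRoot_exp a ha).card_nthRootsFinset]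
    _ ≤ _ := by
      refine card_le_topdeg_of_forall_apply_mul_eq _ (h := fun z => -z ^ (k - c)) (by fun_prop)
        (by simp [Nat.sub_ne_zero_of_lt hck]) (fun t => (t ^ a, 0)) (fun t _ ω hω => ?_)
        fun t ht => finite_fiber ha (pow_ne_zero a ht)
      have hω : ω ^ a = 1 := (mem_nthRootsFinset (Nat.pos_of_ne_zero ha) 1).1 hω
      simp only [classFourMap, mul_pow ω t a, hω, one_mul, Prod.mk.injEq, true_and]
      rw [mul_neg, ← pow_add, Nat.add_sub_cancel' hck.le, neg_add_cancel]

end classFourMap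

theorem topdeg_class_four_map_general
    (a c k : ℕ) (ha : 2 ≤ a) (hc : 1 ≤ c)
    (f : ℂ × ℂ → ℂ × ℂ)
    (hf : ∀ p : ℂ × ℂ, f p = (p.1 ^ a, p.1 ^ c * p.2 + p.1 ^ k)) :
    topdeg Set.univ f = if k ≤ c then (Nat.gcd a k : ℕ∞) else (a : ℕ∞) := by
  obtain rfl : f = classFourMap a c k := funext hf
  have ha0 : a ≠ 0 := by omega
  have hc0 : c ≠ 0 := by omega
  split_ifs with hkc
  · exact (classFourMap.topdeg_le_gcd ha0 hc0 hkc).antisymm (classFourMap.gcd_le_topdeg ha0)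
  · exact (classFourMap.topdeg_le ha0 hc0).antisymm (classFourMap.le_topdeg ha0 (by omega))

/-- For integers `a ≥ 2`, `c ≥ 1`, `k ≥ 1`, the topological degree at `0`
of `f_k(z,w) = (z^a, z^c w + z^k)` equals `gcd(a,k)` if `k ≤ c`, and equals `a` if `k > c`. -/
theorem topdeg_class_four_map
    (a c k : ℕ) (ha : 2 ≤ a) (hc : 1 ≤ c) (hk : 1 ≤ k)
    (f : ℂ × ℂ → ℂ × ℂ)
    (hf : ∀ p : ℂ × ℂ, f p = (p.1 ^ a, p.1 ^ c * p.2 + p.1 ^ k)) :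
    topdeg Set.univ f = if k ≤ c then (Nat.gcd a k : ℕ∞) else (a : ℕ∞) :=
  topdeg_class_four_map_general a c k ha hc f hf
end
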